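/- Let ρ = a|00⟩⟨00| + b|01⟩⟨01| + c|10⟩⟨10| + d|11⟩⟨11| with 0 ≤ a,b,c,d ≤ 1, a+b+c+d = 1, b,c > 0, and let σ = |s⟩⟨s| with |s⟩ = (√b|01⟩ + √c|10⟩)/√(b+c). Then for every t > t₀ = (b+c)√(ad/(bc)), the state ρ' = (ρ + tσ)/(1+t) is entangled, and t₀·C(σ) = 2√(ad). -/

import Mathlib

/-!
A separable two-qubit state satisfies `|ρ₁₂| ≤ √ρ₀₀ · √ρ₃₃`: on a product state `A ⊗ B` the three
entries are `A₀₁B₁₀`, `A₀₀B₀₀` and `A₁₁B₁₁`, so the bound follows from the nonnegative `2 × 2`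
minors of `A` and `B`, and Cauchy–Schwarz carries it over to convex combinations. For the mixture
`(ρ + tσ)/(1 + t)` the bound reads `t √(bc)/(b + c) ≤ √(ad)`, i.e. `t ≤ t₀`.

For a pure state `|ψ⟩⟨ψ|` the matrix `ρρ̃` has rank one, with only nonzero eigenvalue
`|ψᵀ (σ_y ⊗ σ_y) ψ|²`; this gives `C(σ) = 2√(bc)/(b + c)`.
-/

open scoped ComplexOrder

noncomputable section

/-- σ_y ⊗ σ_y as a 4×4 matrix, in the product basis |00⟩,|01⟩,|10⟩,|11⟩. -/
def sigmaYY : Matrix (Fin 4) (Fin 4) ℂ :=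
  !![0, 0, 0, -1; 0, 0, 1, 0; 0, 1, 0, 0; -1, 0, 0, 0]

/-- The spin-flipped state ρ̃ = (σ_y⊗σ_y) ρ* (σ_y⊗σ_y). -/
def spinFlip (ρ : Matrix (Fin 4) (Fin 4) ℂ) : Matrix (Fin 4) (Fin 4) ℂ :=
  sigmaYY * ρ.map (starRingEnd ℂ) * sigmaYY

/-- The square roots of the eigenvalues (with multiplicity) of ρρ̃,
sorted in increasing order; so `λ₁ = (lamList ρ).getD 3 0` is the largest, etc. -/
def lamList (ρ : Matrix (Fin 4) (Fin 4) ℂ) : List ℝ :=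
  Multiset.sort
    (((ρ * spinFlip ρ).charpoly.roots).map (fun z => Real.sqrt z.re)) (· ≤ ·)

/-- Λ(ρ) = λ₁ − λ₂ − λ₃ − λ₄. -/
def Lam (ρ : Matrix (Fin 4) (Fin 4) ℂ) : ℝ :=
  (lamList ρ).getD 3 0 - (lamList ρ).getD 2 0 - (lamList ρ).getD 1 0 - (lamList ρ).getD 0 0

/-- The concurrence C(ρ) = max{Λ(ρ), 0}. -/
def Conc (ρ : Matrix (Fin 4) (Fin 4) ℂ) : ℝ := max (Lam ρ) 0

/-- A quantum state: positive semidefinite with unit trace. -/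
def IsQState {n : Type*} [Fintype n] [DecidableEq n] (ρ : Matrix n n ℂ) : Prop :=
  ρ.PosSemidef ∧ ρ.trace = 1

/-- Kronecker product of two 2×2 matrices as a 4×4 matrix, in the basis
|00⟩,|01⟩,|10⟩,|11⟩ (index 2i+j for (i,j)). -/
def kron2 (A B : Matrix (Fin 2) (Fin 2) ℂ) : Matrix (Fin 4) (Fin 4) ℂ :=
  Matrix.of fun i j =>
    A ⟨i.val / 2, by omega⟩ ⟨j.val / 2, by omega⟩ *
      B ⟨i.val % 2, by omega⟩ ⟨j.val % 2, by omega⟩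

/-- Separability of a two-qubit state. -/
def IsSep2 (ρ : Matrix (Fin 4) (Fin 4) ℂ) : Prop :=
  ∃ (m : ℕ) (p : Fin m → ℝ) (A B : Fin m → Matrix (Fin 2) (Fin 2) ℂ),
    (∀ i, 0 ≤ p i) ∧ (∑ i, p i = 1) ∧
    (∀ i, IsQState (A i)) ∧ (∀ i, IsQState (B i)) ∧
    ρ = ∑ i, p i • kron2 (A i) (B i)

/-- An entangled two-qubit state: a state which is not separable. -/
def IsEnt2 (ρ : Matrix (Fin 4) (Fin 4) ℂ) : Prop := IsQState ρ ∧ ¬ IsSep2 ρ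

/-- The negative entanglement measure (NEM). -/
def NEM2 (ρ : Matrix (Fin 4) (Fin 4) ℂ) : ℝ :=
  - sInf { x : ℝ | ∃ (t : ℝ) (σ : Matrix (Fin 4) (Fin 4) ℂ),
      0 < t ∧ IsEnt2 σ ∧ 0 < Conc ((1 / (1 + t)) • (ρ + t • σ)) ∧ x = t * Conc σ }

/-- The rank-one projector |ψ⟩⟨ψ| associated to a vector ψ. -/
def outer {n : Type*} [Fintype n] (ψ : n → ℂ) : Matrix n n ℂ :=
  Matrix.of fun i j => ψ i * (starRingEnd ℂ) (ψ j)

/-- σ = |s⟩⟨s| with |s⟩ = (√b|01⟩ + √c|10⟩)/√(b+c). -/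
def sigmaBC (b c : ℝ) : Matrix (Fin 4) (Fin 4) ℂ :=
  outer ![0, (Real.sqrt b / Real.sqrt (b + c) : ℂ), (Real.sqrt c / Real.sqrt (b + c) : ℂ), 0]

open Matrix

theorem Matrix.PosSemidef.norm_apply_le {n : Type*} [Fintype n] {M : Matrix n n ℂ}
    (hM : M.PosSemidef) (i j : n) : ‖M i j‖ ≤ √(M i i).re * √(M j j).re := by
  have hdet := (hM.submatrix ![i, j]).det_nonneg
  have hji : M j i = star (M i j) := by rw [← hM.1.apply i j]; simp
  simp only [det_fin_two, submatrix_apply, cons_val_zero, cons_val_one, hji,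
    RCLike.star_def, Complex.mul_conj, Complex.normSq_eq_norm_sq] at hdet
  rw [← hM.1.coe_re_apply_self i, ← hM.1.coe_re_apply_self j, ← RCLike.ofReal_mul] at hdet
  rw [← Real.sqrt_mul (Complex.nonneg_iff.mp hM.diag_nonneg).1]
  exact Real.le_sqrt_of_sq_le (RCLike.ofReal_le_ofReal.mp (sub_nonneg.mp hdet))

theorem norm_sum_le_sqrt_mul_sqrt {ι E : Type*} [SeminormedAddCommGroup E] (s : Finset ι)
    {z : ι → E} {x y : ι → ℝ} (hx : ∀ i, 0 ≤ x i) (hy : ∀ i, 0 ≤ y i)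
    (h : ∀ i, ‖z i‖ ≤ √(x i) * √(y i)) :
    ‖∑ i ∈ s, z i‖ ≤ √(∑ i ∈ s, x i) * √(∑ i ∈ s, y i) :=
  (norm_sum_le _ _).trans <|
    (Finset.sum_le_sum fun i _ => h i).trans (Real.sum_sqrt_mul_sqrt_le s hx hy)

section kron2

variable (A B : Matrix (Fin 2) (Fin 2) ℂ)

theorem kron2_apply_zero_zero : kron2 A B 0 0 = A 0 0 * B 0 0 := rfl

theorem kron2_apply_three_three : kron2 A B 3 3 = A 1 1 * B 1 1 := rfl

theorem kron2_apply_one_two : kron2 A B 1 2 = A 0 1 * B 1 0 := rfl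

theorem smul_kron2 (p : ℝ) : p • kron2 A B = kron2 (p • A) B := by
  ext i j; simp [kron2, mul_assoc]

variable {A B}

theorem re_kron2_apply_self_nonneg (hA : A.PosSemidef) (hB : B.PosSemidef) (i : Fin 4) :
    0 ≤ (kron2 A B i i).re :=
  (Complex.nonneg_iff.mp (mul_nonneg hA.diag_nonneg hB.diag_nonneg)).1

theorem norm_kron2_apply_one_two_le (hA : A.PosSemidef) (hB : B.PosSemidef) :
    ‖kron2 A B 1 2‖ ≤ √(kron2 A B 0 0).re * √(kron2 A B 3 3).re := by
  have hA0 := Complex.nonneg_iff.mp (hA.diag_nonneg (i := 0))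
  have hA1 := Complex.nonneg_iff.mp (hA.diag_nonneg (i := 1))
  have hB0 := Complex.nonneg_iff.mp (hB.diag_nonneg (i := 0))
  have hB1 := Complex.nonneg_iff.mp (hB.diag_nonneg (i := 1))
  rw [kron2_apply_one_two, kron2_apply_zero_zero, kron2_apply_three_three, norm_mul,
    Complex.mul_re, Complex.mul_re, ← hA0.2, ← hA1.2, ← hB0.2, ← hB1.2, mul_zero, sub_zero,
    sub_zero, Real.sqrt_mul hA0.1, Real.sqrt_mul hA1.1]
  calc ‖A 0 1‖ * ‖B 1 0‖ ≤ (√(A 0 0).re * √(A 1 1).re) * (√(B 1 1).re * √(B 0 0).re) :=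
        mul_le_mul (hA.norm_apply_le 0 1) (hB.norm_apply_le 1 0) (norm_nonneg _) (by positivity)
    _ = _ := by ring

end kron2

theorem IsSep2.norm_apply_one_two_le {ρ : Matrix (Fin 4) (Fin 4) ℂ} (h : IsSep2 ρ) :
    ‖ρ 1 2‖ ≤ √(ρ 0 0).re * √(ρ 3 3).re := by
  obtain ⟨m, p, A, B, hp, -, hA, hB, rfl⟩ := h
  have hpA : ∀ i, (p i • A i).PosSemidef := fun i => (hA i).1.smul (hp i)
  simp only [smul_kron2, Matrix.sum_apply, Complex.re_sum]
  exact norm_sum_le_sqrt_mul_sqrt _ (fun i => re_kron2_apply_self_nonneg (hpA i) (hB i).1 0)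
    (fun i => re_kron2_apply_self_nonneg (hpA i) (hB i).1 3)
    fun i => norm_kron2_apply_one_two_le (hpA i) (hB i).1

theorem IsQState.mix {n : Type*} [Fintype n] [DecidableEq n] {ρ σ : Matrix n n ℂ}
    (hρ : IsQState ρ) (hσ : IsQState σ) {t : ℝ} (ht : 0 ≤ t) :
    IsQState ((1 / (1 + t)) • (ρ + t • σ)) := by
  refine ⟨(hρ.1.add (hσ.1.smul ht)).smul (by positivity), ?_⟩
  rw [trace_smul, trace_add, trace_smul, hρ.2, hσ.2, Complex.real_smul, Complex.real_smul]
  push_cast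
  field_simp

theorem isQState_diagonal_four {a b c d : ℝ} (ha : 0 ≤ a) (hb : 0 ≤ b) (hc : 0 ≤ c)
    (hd : 0 ≤ d) (hsum : a + b + c + d = 1) :
    IsQState (diagonal ![(a : ℂ), (b : ℂ), (c : ℂ), (d : ℂ)]) := by
  refine ⟨posSemidef_diagonal_iff.mpr fun i => ?_, ?_⟩
  · fin_cases i <;> simpa
  · simp [trace_diagonal, Fin.sum_univ_four]
    exact_mod_cast hsum

open Polynomial in
theorem conc_eq_sqrt_of_charpoly {σ : Matrix (Fin 4) (Fin 4) ℂ} {e : ℝ}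
    (h : (σ * spinFlip σ).charpoly = X ^ 4 - (e : ℂ) • X ^ 3) : Conc σ = √e := by
  have hroots : (σ * spinFlip σ).charpoly.roots = {0, 0, 0, (e : ℂ)} := by
    rw [h, show (X ^ 4 - (e : ℂ) • X ^ 3 : ℂ[X]) = X ^ 3 * (X - C (e : ℂ)) by
      rw [smul_eq_C_mul]; ring,
      roots_mul (mul_ne_zero (pow_ne_zero _ X_ne_zero) (X_sub_C_ne_zero _)), roots_pow,
      roots_X, roots_X_sub_C]
    rfl
  have hlam : lamList σ = [0, 0, 0, √e] := by
    refine List.Perm.eq_of_pairwise' (r := (· ≤ ·)) (Multiset.pairwise_sort _ _) ?_ ?_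
    · simp [Real.sqrt_nonneg]
    · rw [← Multiset.coe_eq_coe, lamList, Multiset.sort_eq, hroots]
      simp [Multiset.insert_eq_cons]
      rfl
  simp [Conc, Lam, hlam, Real.sqrt_nonneg]

theorem outer_eq_vecMulVec {n : Type*} [Fintype n] (ψ : n → ℂ) :
    outer ψ = vecMulVec ψ (star ψ) := rfl

theorem spinFlip_vecMulVec (u v : Fin 4 → ℂ) :
    spinFlip (vecMulVec u v) = vecMulVec (sigmaYY *ᵥ star u) (star v ᵥ* sigmaYY) := by
  have hmap : (vecMulVec u v).map (starRingEnd ℂ) = vecMulVec (star u) (star v) := by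
    ext i j; simp [vecMulVec_apply]
  rw [spinFlip, hmap, mul_vecMulVec, vecMulVec_mul]

theorem conc_outer (ψ : Fin 4 → ℂ) : Conc (outer ψ) = ‖ψ ⬝ᵥ sigmaYY *ᵥ ψ‖ := by
  set w := ψ ⬝ᵥ sigmaYY *ᵥ ψ
  have hw : star ψ ⬝ᵥ sigmaYY *ᵥ star ψ = star w := by
    simp [w, dotProduct, mulVec, Fin.sum_univ_four, sigmaYY]
  have hprod : outer ψ * spinFlip (outer ψ) = vecMulVec ψ (star w • (ψ ᵥ* sigmaYY)) := by
    rw [outer_eq_vecMulVec, spinFlip_vecMulVec, star_star, vecMulVec_mul_vecMulVec, hw]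
  refine (conc_eq_sqrt_of_charpoly (e := ‖w‖ ^ 2) ?_).trans (Real.sqrt_sq (norm_nonneg w))
  rw [hprod, charpoly_vecMulVec, Fintype.card_fin, dotProduct_smul, dotProduct_comm,
    ← dotProduct_mulVec, smul_eq_mul, RCLike.star_def, Complex.conj_mul']
  norm_num

section sigmaBC

variable {b c : ℝ}

theorem sigmaBC_apply_zero_zero : sigmaBC b c 0 0 = 0 := by simp [sigmaBC, outer]

theorem sigmaBC_apply_three_three : sigmaBC b c 3 3 = 0 := by simp [sigmaBC, outer]

theorem sigmaBC_apply_one_two (hbc : 0 ≤ b + c) :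
    sigmaBC b c 1 2 = ((√b * √c / (b + c) : ℝ) : ℂ) := by
  simp only [sigmaBC, outer, of_apply]
  simp [div_mul_div_comm, ← Complex.ofReal_mul, Real.mul_self_sqrt hbc]

theorem isQState_sigmaBC (hb : 0 ≤ b) (hc : 0 ≤ c) (hbc : 0 < b + c) :
    IsQState (sigmaBC b c) := by
  rw [sigmaBC, outer_eq_vecMulVec]
  refine ⟨posSemidef_vecMulVec_self_star _, ?_⟩
  rw [trace_vecMulVec]
  simp only [dotProduct, Fin.sum_univ_four]
  simp [← Complex.ofReal_div, ← Complex.ofReal_mul, ← Complex.ofReal_add, ← Complex.ofReal_one]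
  rw [div_mul_div_comm, div_mul_div_comm, Real.mul_self_sqrt hb, Real.mul_self_sqrt hc,
    Real.mul_self_sqrt hbc.le, ← add_div, div_self hbc.ne']

theorem conc_sigmaBC (hbc : 0 ≤ b + c) : Conc (sigmaBC b c) = 2 * (√b * √c / (b + c)) := by
  rw [sigmaBC, conc_outer]
  simp [dotProduct, mulVec, Fin.sum_univ_four, sigmaYY, ← Complex.ofReal_div,
    ← Complex.ofReal_mul, ← Complex.ofReal_add]
  rw [div_mul_div_comm, div_mul_div_comm, Real.mul_self_sqrt hbc, abs_of_nonneg (by positivity)]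
  ring

end sigmaBC

theorem not_isSep2_mix_diagonal_sigmaBC {a b c d t : ℝ}
    (hbc : 0 < b + c) (ht : 0 ≤ t) (hlt : √a * √d < t * (√b * √c / (b + c))) :
    ¬ IsSep2
      ((1 / (1 + t)) • (diagonal ![(a : ℂ), (b : ℂ), (c : ℂ), (d : ℂ)] + t • sigmaBC b c)) := by
  set ρ := (1 / (1 + t)) • (diagonal ![(a : ℂ), (b : ℂ), (c : ℂ), (d : ℂ)] + t • sigmaBC b c)
  have h00 : ρ 0 0 = ((a / (1 + t) : ℝ) : ℂ) := by
    simp [ρ, sigmaBC_apply_zero_zero]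
    ring
  have h33 : ρ 3 3 = ((d / (1 + t) : ℝ) : ℂ) := by
    simp [ρ, sigmaBC_apply_three_three]
    ring
  have h12 : ρ 1 2 = ((t * (√b * √c / (b + c)) / (1 + t) : ℝ) : ℂ) := by
    simp [ρ, sigmaBC_apply_one_two hbc.le]
    ring
  intro hsep
  have hcrit := hsep.norm_apply_one_two_le
  rw [h00, h33, h12, Complex.norm_real, Complex.ofReal_re, Complex.ofReal_re,
    Real.norm_of_nonneg (by positivity), Real.sqrt_div' _ (by positivity),
    Real.sqrt_div' _ (by positivity), div_mul_div_comm, Real.mul_self_sqrt (by positivity),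
    div_le_div_iff_of_pos_right (by positivity)] at hcrit
  exact hcrit.not_gt hlt

theorem mix_diagonal_sigmaBC_general (a b c d : ℝ)
    (ha : 0 ≤ a) (hb : 0 < b) (hc : 0 < c) (hd : 0 ≤ d)
    (hsum : a + b + c + d = 1) :
    (∀ t : ℝ, (b + c) * Real.sqrt (a * d / (b * c)) < t →
      IsEnt2 ((1 / (1 + t)) •
        ((Matrix.diagonal ![(a : ℂ), (b : ℂ), (c : ℂ), (d : ℂ)]) + t • sigmaBC b c))) ∧
    ((b + c) * Real.sqrt (a * d / (b * c))) * Conc (sigmaBC b c) = 2 * Real.sqrt (a * d) := by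
  have hbc : 0 < b + c := by positivity
  have ht₀ : (b + c) * √(a * d / (b * c)) * (√b * √c / (b + c)) = √a * √d := by
    rw [Real.sqrt_div' _ (by positivity), Real.sqrt_mul hb.le, Real.sqrt_mul ha]
    field_simp
  refine ⟨fun t ht => ?_, by rw [conc_sigmaBC hbc.le, Real.sqrt_mul ha, ← ht₀]; ring⟩
  have ht0 : 0 ≤ t := (by positivity : 0 ≤ (b + c) * √(a * d / (b * c))).trans ht.le
  refine ⟨(isQState_diagonal_four ha hb.le hc.le hd hsum).mix
    (isQState_sigmaBC hb.le hc.le hbc) ht0, not_isSep2_mix_diagonal_sigmaBC hbc ht0 ?_⟩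
  rw [← ht₀]
  exact mul_lt_mul_of_pos_right ht (by positivity)

/-- with ρ = a|00⟩⟨00| + b|01⟩⟨01| + c|10⟩⟨10| + d|11⟩⟨11| (b, c > 0)
and σ = |(√b|01⟩+√c|10⟩)/√(b+c)⟩⟨·|, for every t > t₀ = (b+c)√(ad/(bc)) the state
ρ' = (ρ+tσ)/(1+t) is entangled, and t₀·C(σ) = 2√(ad). -/
theorem mix_diagonal_sigmaBC (a b c d : ℝ)
    (ha : 0 ≤ a) (hb : 0 < b) (hc : 0 < c) (hd : 0 ≤ d)
    (ha1 : a ≤ 1) (hb1 : b ≤ 1) (hc1 : c ≤ 1) (hd1 : d ≤ 1)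
    (hsum : a + b + c + d = 1) :
    (∀ t : ℝ, (b + c) * Real.sqrt (a * d / (b * c)) < t →
      IsEnt2 ((1 / (1 + t)) •
        ((Matrix.diagonal ![(a : ℂ), (b : ℂ), (c : ℂ), (d : ℂ)]) + t • sigmaBC b c))) ∧
    ((b + c) * Real.sqrt (a * d / (b * c))) * Conc (sigmaBC b c) = 2 * Real.sqrt (a * d) :=
  mix_diagonal_sigmaBC_general a b c d ha hb hc hd hsum

end
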